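/- Let {c_n}_{n≥2} be a sequence of positive reals with lim_{n→∞} c_n = 0, and let {z_n}_{n≥1} be a sequence in the open unit disk 𝔻 satisfying (1 - |z_n|)/(1 - |z_{n-1}|) = c_n for all n ≥ 2. Then {z_n} is a thin Blaschke sequence, i.e. lim_{k→∞} ∏_{j : j ≠ k} d(z_k, z_j) = 1. -/

import Mathlib

/-! Write `a n = 1 - ‖z n‖`. From `1 - d(z, w)² = (1 - |z|²)(1 - |w|²) / |1 - z̄ w|²` and
`|1 - z̄ w| ≥ 1 - |w|` one gets `1 - d(z_k, z_j) ≤ 4 min (a k / a j, a j / a k)`. Given `ε`, the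
ratios `a (n + 1) / a n` are at most `ε` from some `N` on, so for `j, k ≥ N` this bound is at most
`4 ε^|j - k|`, while for `j < N` it is at most `4 a k / a j` with `a k → 0`. Hence
`∑_{j ≠ k} (1 - d(z_k, z_j))` is small for large `k`, and a product of factors in `[0, 1]` is at
least `1 - ∑ (1 - factor)`. -/

open Complex Filter Metric

/-- The pseudohyperbolic distance `d(z,w) = |z - w| / |1 - conj z * w|` on the unit disk. -/
noncomputable def pd (z w : ℂ) : ℝ :=
  ‖z - w‖ / ‖1 - (starRingEnd ℂ) z * w‖

lemma pd_comm (z w : ℂ) : pd z w = pd w z := by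
  rw [pd, pd, norm_sub_rev z w, ← Complex.norm_conj (1 - _)]
  simp [mul_comm]

lemma pd_nonneg (z w : ℂ) : 0 ≤ pd z w :=
  div_nonneg (norm_nonneg _) (norm_nonneg _)

lemma norm_one_sub_conj_mul_sq_sub_norm_sub_sq (z w : ℂ) :
    ‖1 - (starRingEnd ℂ) z * w‖ ^ 2 - ‖z - w‖ ^ 2 = (1 - ‖z‖ ^ 2) * (1 - ‖w‖ ^ 2) := by
  simp only [Complex.sq_norm, Complex.normSq_apply, Complex.mul_re, Complex.mul_im,
    Complex.sub_re, Complex.sub_im, Complex.one_re, Complex.one_im, Complex.conj_re,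
    Complex.conj_im]
  ring

lemma sub_norm_le_norm_one_sub_conj_mul {z : ℂ} (hz : ‖z‖ ≤ 1) (w : ℂ) :
    1 - ‖w‖ ≤ ‖1 - (starRingEnd ℂ) z * w‖ := by
  have h := norm_sub_norm_le (1 : ℂ) ((starRingEnd ℂ) z * w)
  rw [norm_one, norm_mul, Complex.norm_conj] at h
  nlinarith [norm_nonneg w]

lemma one_sub_pd_sq {z w : ℂ} (hw : ‖w‖ < 1) (hz : ‖z‖ ≤ 1) :
    1 - pd z w ^ 2 = (1 - ‖z‖ ^ 2) * (1 - ‖w‖ ^ 2) / ‖1 - (starRingEnd ℂ) z * w‖ ^ 2 := by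
  have hD : 0 < ‖1 - (starRingEnd ℂ) z * w‖ :=
    (sub_pos.2 hw).trans_le (sub_norm_le_norm_one_sub_conj_mul hz w)
  rw [← norm_one_sub_conj_mul_sq_sub_norm_sub_sq, pd, div_pow, sub_div,
    div_self (pow_ne_zero 2 hD.ne')]

lemma pd_le_one {z w : ℂ} (hz : ‖z‖ < 1) (hw : ‖w‖ < 1) : pd z w ≤ 1 := by
  have h := one_sub_pd_sq hw hz.le
  have : 0 ≤ (1 - ‖z‖ ^ 2) * (1 - ‖w‖ ^ 2) / ‖1 - (starRingEnd ℂ) z * w‖ ^ 2 := by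
    have := norm_nonneg z; have := norm_nonneg w
    apply div_nonneg (mul_nonneg _ _) (sq_nonneg _) <;> nlinarith
  nlinarith [pd_nonneg z w]

lemma one_sub_pd_le {z w : ℂ} (hz : ‖z‖ < 1) (hw : ‖w‖ < 1) :
    1 - pd z w ≤ 4 * (1 - ‖z‖) / (1 - ‖w‖) := by
  have hb : 0 < 1 - ‖w‖ := sub_pos.2 hw
  have hD := sub_norm_le_norm_one_sub_conj_mul hz.le w
  have hpd := pd_le_one hz hw
  have hnum : (1 - ‖z‖ ^ 2) * (1 - ‖w‖ ^ 2) ≤ 4 * (1 - ‖z‖) * (1 - ‖w‖) := by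
    have := norm_nonneg z; have := norm_nonneg w
    have h4 : (1 + ‖z‖) * (1 + ‖w‖) ≤ 4 := by nlinarith
    calc (1 - ‖z‖ ^ 2) * (1 - ‖w‖ ^ 2) = (1 - ‖z‖) * (1 - ‖w‖) * ((1 + ‖z‖) * (1 + ‖w‖)) := by
          ring
      _ ≤ (1 - ‖z‖) * (1 - ‖w‖) * 4 := by gcongr
      _ = 4 * (1 - ‖z‖) * (1 - ‖w‖) := by ring
  calc 1 - pd z w ≤ 1 - pd z w ^ 2 := by nlinarith [pd_nonneg z w]
    _ = (1 - ‖z‖ ^ 2) * (1 - ‖w‖ ^ 2) / ‖1 - (starRingEnd ℂ) z * w‖ ^ 2 := one_sub_pd_sq hw hz.le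
    _ ≤ 4 * (1 - ‖z‖) * (1 - ‖w‖) / (1 - ‖w‖) ^ 2 := by gcongr
    _ = 4 * (1 - ‖z‖) / (1 - ‖w‖) := by field_simp

lemma one_sub_pd_le_four_mul_min {z w : ℂ} (hz : ‖z‖ < 1) (hw : ‖w‖ < 1) :
    1 - pd z w ≤ 4 * min ((1 - ‖z‖) / (1 - ‖w‖)) ((1 - ‖w‖) / (1 - ‖z‖)) := by
  rw [mul_min_of_nonneg _ _ (by norm_num : (0 : ℝ) ≤ 4), ← mul_div_assoc, ← mul_div_assoc]
  exact le_min (one_sub_pd_le hz hw) (pd_comm z w ▸ one_sub_pd_le hw hz)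

lemma sum_pow_le_of_zero_notMem {ε : ℝ} (h0 : 0 ≤ ε) (h1 : ε < 1) {T : Finset ℕ}
    (hT : 0 ∉ T) : ∑ i ∈ T, ε ^ i ≤ ε / (1 - ε) := by
  have hsub : T ⊆ Finset.Ico 1 (T.sup id + 1) := fun i hi => Finset.mem_Ico.2
    ⟨Nat.one_le_iff_ne_zero.2 fun h => hT (h ▸ hi), Nat.lt_succ_of_le (Finset.le_sup (f := id) hi)⟩
  calc ∑ i ∈ T, ε ^ i ≤ ∑ i ∈ Finset.Ico 1 (T.sup id + 1), ε ^ i :=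
        Finset.sum_le_sum_of_subset_of_nonneg hsub fun i _ _ => pow_nonneg h0 i
    _ ≤ ε ^ 1 / (1 - ε) := geom_sum_Ico_le_of_lt_one h0 h1
    _ = ε / (1 - ε) := by rw [pow_one]

lemma sum_pow_dist_le_of_injOn {ε : ℝ} (h0 : 0 ≤ ε) (h1 : ε < 1) {T : Finset ℕ} {k : ℕ}
    (hk : k ∉ T) (hinj : Set.InjOn (Nat.dist · k) T) :
    ∑ j ∈ T, ε ^ Nat.dist j k ≤ ε / (1 - ε) := by
  rw [← Finset.sum_image hinj]
  refine sum_pow_le_of_zero_notMem h0 h1 fun h => ?_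
  obtain ⟨j, hj, hjk⟩ := Finset.mem_image.1 h
  exact hk (Nat.eq_of_dist_eq_zero hjk ▸ hj)

lemma sum_pow_dist_le {ε : ℝ} (h0 : 0 ≤ ε) (h1 : ε < 1) {S : Finset ℕ} {k : ℕ} (hk : k ∉ S) :
    ∑ j ∈ S, ε ^ Nat.dist j k ≤ 2 * (ε / (1 - ε)) := by
  rw [← Finset.sum_filter_add_sum_filter_not S (· < k), two_mul]
  gcongr <;> refine sum_pow_dist_le_of_injOn h0 h1 (fun h => hk (Finset.mem_filter.1 h).1) ?_
    <;> intro x hx y hy h <;> simp only [Finset.coe_filter, Set.mem_ofPred_eq, Nat.dist] at * <;> omega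

lemma Finset.one_sub_sum_le_prod_one_sub {ι : Type*} (s : Finset ι) {g : ι → ℝ}
    (h0 : ∀ i ∈ s, 0 ≤ g i) (h1 : ∀ i ∈ s, g i ≤ 1) : 1 - ∑ i ∈ s, g i ≤ ∏ i ∈ s, (1 - g i) := by
  induction s using Finset.cons_induction with
  | empty => simp
  | cons i s hi ih =>
    simp only [Finset.mem_cons, forall_eq_or_imp] at h0 h1
    rw [Finset.sum_cons, Finset.prod_cons]
    have hs : 0 ≤ ∑ j ∈ s, g j := Finset.sum_nonneg h0.2
    nlinarith [mul_le_mul_of_nonneg_left (ih h0.2 h1.2) (sub_nonneg.2 h1.1), mul_nonneg h0.1 hs]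

lemma le_pow_mul_of_succ_le {a : ℕ → ℝ} {ε : ℝ} (hε : 0 ≤ ε) {N : ℕ}
    (h : ∀ n ≥ N, a (n + 1) ≤ ε * a n) {m n : ℕ} (hm : N ≤ m) (hmn : m ≤ n) :
    a n ≤ ε ^ (n - m) * a m := by
  induction n, hmn using Nat.le_induction with
  | base => simp
  | succ n hmn ih =>
    calc a (n + 1) ≤ ε * a n := h n (hm.trans hmn)
      _ ≤ ε * (ε ^ (n - m) * a m) := by gcongr
      _ = ε ^ (n + 1 - m) * a m := by rw [Nat.sub_add_comm hmn, pow_succ]; ring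

lemma min_div_le_pow_dist {a : ℕ → ℝ} (ha : ∀ n, 0 < a n) {ε : ℝ} (hε : 0 ≤ ε) {N : ℕ}
    (h : ∀ n ≥ N, a (n + 1) ≤ ε * a n) {j k : ℕ} (hj : N ≤ j) (hk : N ≤ k) :
    min (a k / a j) (a j / a k) ≤ ε ^ Nat.dist j k := by
  rcases le_total j k with hjk | hkj
  · rw [Nat.dist_eq_sub_of_le hjk]
    exact (min_le_left _ _).trans ((div_le_iff₀ (ha j)).2 (le_pow_mul_of_succ_le hε h hj hjk))
  · rw [Nat.dist_comm, Nat.dist_eq_sub_of_le hkj]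
    exact (min_le_right _ _).trans ((div_le_iff₀ (ha k)).2 (le_pow_mul_of_succ_le hε h hk hkj))

lemma tendsto_zero_of_tendsto_div_zero {a : ℕ → ℝ} (ha : ∀ n, 0 < a n)
    (hratio : Tendsto (fun n => a (n + 1) / a n) atTop (nhds 0)) : Tendsto a atTop (nhds 0) := by
  refine (summable_of_ratio_test_tendsto_lt_one zero_lt_one
    (Eventually.of_forall fun n => (ha n).ne') ?_).tendsto_atTop_zero
  simpa only [Real.norm_of_nonneg (ha _).le] using hratio

theorem eventually_sum_min_div_le {a : ℕ → ℝ} (ha : ∀ n, 0 < a n)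
    (hratio : Tendsto (fun n => a (n + 1) / a n) atTop (nhds 0)) {δ : ℝ} (hδ : 0 < δ) :
    ∀ᶠ k in atTop, ∀ S : Finset ℕ, k ∉ S → ∑ j ∈ S, min (a k / a j) (a j / a k) ≤ δ := by
  set ε := min (1 / 2) (δ / 5)
  have hε0 : 0 < ε := by positivity
  have hε1 : ε ≤ 1 / 2 := min_le_left _ _
  obtain ⟨N, hN⟩ : ∃ N, ∀ n ≥ N, a (n + 1) ≤ ε * a n := by
    obtain ⟨N, hN⟩ := eventually_atTop.1 (hratio.eventually (ge_mem_nhds hε0))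
    exact ⟨N, fun n hn => (div_le_iff₀ (ha n)).1 (hN n hn)⟩
  set C := ∑ j ∈ Finset.range N, 1 / a j
  have hsmall : Tendsto (fun k => a k * C) atTop (nhds 0) := by
    simpa using (tendsto_zero_of_tendsto_div_zero ha hratio).mul_const C
  filter_upwards [eventually_ge_atTop N, hsmall.eventually (ge_mem_nhds hε0)] with k hkN hkC S hkS
  have head : ∑ j ∈ S.filter (· < N), min (a k / a j) (a j / a k) ≤ ε := by
    have hsub : S.filter (· < N) ⊆ Finset.range N := fun j hj => by
      simpa using (Finset.mem_filter.1 hj).2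
    calc ∑ j ∈ S.filter (· < N), min (a k / a j) (a j / a k)
        ≤ ∑ j ∈ S.filter (· < N), a k / a j := Finset.sum_le_sum fun j _ => min_le_left _ _
      _ ≤ ∑ j ∈ Finset.range N, a k / a j :=
        Finset.sum_le_sum_of_subset_of_nonneg hsub fun j _ _ => (div_pos (ha k) (ha j)).le
      _ = a k * C := by rw [Finset.mul_sum]; simp only [mul_one_div]
      _ ≤ ε := hkC
  have tail : ∑ j ∈ S.filter (¬ · < N), min (a k / a j) (a j / a k) ≤ 2 * (ε / (1 - ε)) :=
    calc ∑ j ∈ S.filter (¬ · < N), min (a k / a j) (a j / a k)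
        ≤ ∑ j ∈ S.filter (¬ · < N), ε ^ Nat.dist j k := Finset.sum_le_sum fun j hj =>
          min_div_le_pow_dist ha hε0.le hN (not_lt.1 (Finset.mem_filter.1 hj).2) hkN
      _ ≤ 2 * (ε / (1 - ε)) :=
        sum_pow_dist_le hε0.le (by linarith) fun h => hkS (Finset.mem_filter.1 h).1
  have hgeom : ε / (1 - ε) ≤ 2 * ε := by
    rw [div_le_iff₀ (by linarith)]; nlinarith
  rw [← Finset.sum_filter_add_sum_filter_not S (· < N)]
  linarith [min_le_right (1 / 2) (δ / 5)]

section TprodUnitInterval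

variable {ι : Type*} {f : ι → ℝ} (h0 : ∀ i, 0 ≤ f i) (h1 : ∀ i, f i ≤ 1)
include h0 h1

lemma tprod_le_one_of_mem_Icc : ∏' i, f i ≤ 1 := by
  by_cases hf : Multipliable f
  · exact le_of_tendsto hf.hasProd (Eventually.of_forall fun s =>
      Finset.prod_le_one (fun i _ => h0 i) (fun i _ => h1 i))
  · rw [tprod_eq_one_of_not_multipliable hf]

lemma one_sub_le_tprod_of_sum_le {δ : ℝ} (hδ : ∀ s : Finset ι, ∑ i ∈ s, (1 - f i) ≤ δ) :
    1 - δ ≤ ∏' i, f i := by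
  by_cases hf : Multipliable f
  · refine ge_of_tendsto hf.hasProd (Eventually.of_forall fun s => ?_)
    have := s.one_sub_sum_le_prod_one_sub (g := fun i => 1 - f i)
      (fun i _ => sub_nonneg.2 (h1 i)) (fun i _ => sub_le_self 1 (h0 i))
    simp only [sub_sub_cancel] at this
    linarith [hδ s]
  · rw [tprod_eq_one_of_not_multipliable hf]
    simpa using hδ ∅

end TprodUnitInterval

theorem stmt1_general (c : ℕ → ℝ) (hc : Tendsto c atTop (nhds 0))
    (z : ℕ → ℂ) (hz : ∀ n, z n ∈ ball (0 : ℂ) 1)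
    (hratio : ∀ n, (1 - ‖z (n + 1)‖) / (1 - ‖z n‖) = c n) :
    Tendsto (fun k => ∏' j : {j : ℕ // j ≠ k}, pd (z k) (z (j : ℕ))) atTop (nhds 1) := by
  have hz1 : ∀ n, ‖z n‖ < 1 := fun n => mem_ball_zero_iff.1 (hz n)
  have h0 : ∀ k (j : {j : ℕ // j ≠ k}), 0 ≤ pd (z k) (z j) := fun _ _ => pd_nonneg _ _
  have h1 : ∀ k (j : {j : ℕ // j ≠ k}), pd (z k) (z j) ≤ 1 := fun k j => pd_le_one (hz1 k) (hz1 j)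
  refine tendsto_order.2 ⟨fun b hb => ?_, fun b hb => Eventually.of_forall fun k =>
    (tprod_le_one_of_mem_Icc (h0 k) (h1 k)).trans_lt hb⟩
  filter_upwards [eventually_sum_min_div_le (fun n => sub_pos.2 (hz1 n))
    (hc.congr fun n => (hratio n).symm) (show 0 < (1 - b) / 8 by linarith)] with k hk
  suffices 1 - (1 - b) / 2 ≤ ∏' j : {j : ℕ // j ≠ k}, pd (z k) (z j) by linarith
  refine one_sub_le_tprod_of_sum_le (h0 k) (h1 k) fun s => ?_
  calc ∑ j ∈ s, (1 - pd (z k) (z j))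
      ≤ ∑ j ∈ s.map (Function.Embedding.subtype _),
          4 * min ((1 - ‖z k‖) / (1 - ‖z j‖)) ((1 - ‖z j‖) / (1 - ‖z k‖)) := by
        rw [Finset.sum_map]
        exact Finset.sum_le_sum fun j _ => one_sub_pd_le_four_mul_min (hz1 k) (hz1 j)
    _ ≤ 4 * ((1 - b) / 8) := by
        rw [← Finset.mul_sum]
        gcongr
        exact hk _ (by simp)
    _ ≤ (1 - b) / 2 := by linarith

/-- If `c_n > 0`, `c_n → 0`, and `{z_n}` is a sequence in the open unit disk with
`(1 - |z_n|)/(1 - |z_{n-1}|) = c_n`, then `{z_n}` is a thin Blaschke sequence: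
`lim_{k→∞} ∏_{j ≠ k} d(z_k, z_j) = 1`. -/
theorem stmt1 (c : ℕ → ℝ) (hpos : ∀ n, 0 < c n) (hc : Tendsto c atTop (nhds 0))
    (z : ℕ → ℂ) (hz : ∀ n, z n ∈ ball (0 : ℂ) 1)
    (hratio : ∀ n, (1 - ‖z (n + 1)‖) / (1 - ‖z n‖) = c n) :
    Tendsto (fun k => ∏' j : {j : ℕ // j ≠ k}, pd (z k) (z (j : ℕ))) atTop (nhds 1) :=
  stmt1_general c hc z hz hratio
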